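/- Let G = (V, E) be a finite simple graph with m edges. Construct H' from G by, for each edge ij ∈ E, adding two new vertices q_{ij} and t_{ij} and edges so that {i, j, q_{ij}, t_{ij}} forms a 4-clique. Construct H'' from H' by, for each edge uv of H', adding a new vertex r_{uv} together with edges u·r_{uv} and v·r_{uv} (so each edge of H' lies in a 3-clique); finally add a single new sink vertex t and an edge t·t_{ij} for every ij ∈ E. If G is 3-colorable, then MC₃(H'') ≥ (10 + 2√3)·m + m. -/
import Mathlib

open scoped Classical

/-- The Euclidean norm on `Fin 3 → ℝ`. -/
noncomputable def norm3 (v : Fin 3 → ℝ) : ℝ := Real.sqrt (∑ i, v i ^ 2)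

/-- The rank-3 max-cut value of a finite simple graph:
`(1/4) maxₓ ∑_{uv ∈ E} ‖x(u) - x(v)‖²` over assignments of unit vectors in `ℝ³` to the
vertices (each unordered edge is counted twice in the double sum, whence the `1/8`). -/
noncomputable def mc3 {V : Type} [Fintype V] (G : SimpleGraph V) : ℝ :=
  sSup {c : ℝ | ∃ x : V → Fin 3 → ℝ, (∀ u, norm3 (x u) = 1) ∧
    c = (1 / 8) * ∑ u, ∑ v,
      if G.Adj u v then (norm3 (x u - x v)) ^ 2 else 0}

/-- The graph `H'` obtained from `G` by adding, for each edge `ij ∈ E`, two new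
vertices `q_{ij}`, `t_{ij}` forming a 4-clique `{i, j, q_{ij}, t_{ij}}`. -/
def cliqueGadget {V : Type} (G : SimpleGraph V) :
    SimpleGraph (V ⊕ (G.edgeSet ⊕ G.edgeSet)) :=
  SimpleGraph.fromRel fun a b =>
    match a, b with
    | Sum.inl u, Sum.inl v => G.Adj u v
    | Sum.inl u, Sum.inr (Sum.inl e) => u ∈ (e : Sym2 V)
    | Sum.inl u, Sum.inr (Sum.inr e) => u ∈ (e : Sym2 V)
    | Sum.inr (Sum.inl e), Sum.inr (Sum.inr e') => (e : Sym2 V) = (e' : Sym2 V)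
    | _, _ => False

/-- The graph `H''` obtained from `H' = cliqueGadget G` by adding, for each edge `uv`
of `H'`, a new vertex `r_{uv}` adjacent to both `u` and `v`, and finally a sink
vertex `t` adjacent to every `t_{ij}`. -/
def tetraGadget {V : Type} (G : SimpleGraph V) :
    SimpleGraph (((V ⊕ (G.edgeSet ⊕ G.edgeSet)) ⊕ (cliqueGadget G).edgeSet) ⊕ Unit) :=
  SimpleGraph.fromRel fun a b =>
    match a, b with
    | Sum.inl (Sum.inl x), Sum.inl (Sum.inl y) => (cliqueGadget G).Adj x y
    | Sum.inl (Sum.inl x), Sum.inl (Sum.inr e) =>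
        x ∈ (e : Sym2 (V ⊕ (G.edgeSet ⊕ G.edgeSet)))
    | Sum.inl (Sum.inl (Sum.inr (Sum.inr _))), Sum.inr _ => True
    | _, _ => False

/-! ### Auxiliary geometry: four unit vectors of a regular tetrahedron in `ℝ³`. -/

set_option linter.unusedSectionVars false

noncomputable def tetraP : Fin 4 → Fin 3 → ℝ :=
  ![![2 * Real.sqrt 2 / 3, 0, -(1/3)],
    ![-(Real.sqrt 2) / 3, Real.sqrt 6 / 3, -(1/3)],
    ![-(Real.sqrt 2) / 3, -(Real.sqrt 6) / 3, -(1/3)],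
    ![0, 0, 1]]

lemma tetraP_self (i : Fin 4) : ∑ k, tetraP i k ^ 2 = 1 := by
  have h2 : Real.sqrt 2 * Real.sqrt 2 = 2 := Real.mul_self_sqrt (by norm_num)
  have h6 : Real.sqrt 6 * Real.sqrt 6 = 6 := Real.mul_self_sqrt (by norm_num)
  fin_cases i <;> (simp [tetraP, Fin.sum_univ_three] <;> nlinarith [h2, h6])

lemma tetraP_dot {i j : Fin 4} (h : i ≠ j) : ∑ k, tetraP i k * tetraP j k = -(1/3) := by
  have h2 : Real.sqrt 2 * Real.sqrt 2 = 2 := Real.mul_self_sqrt (by norm_num)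
  have h6 : Real.sqrt 6 * Real.sqrt 6 = 6 := Real.mul_self_sqrt (by norm_num)
  fin_cases i <;> fin_cases j <;>
    first
      | exact absurd rfl h
      | (simp [tetraP, Fin.sum_univ_three] <;> nlinarith [h2, h6])

lemma norm3_sq (v : Fin 3 → ℝ) : norm3 v ^ 2 = ∑ k, v k ^ 2 :=
  Real.sq_sqrt (Finset.sum_nonneg fun _ _ => sq_nonneg _)

lemma norm3_eq_one {v : Fin 3 → ℝ} (h : ∑ k, v k ^ 2 = 1) : norm3 v = 1 := by
  rw [norm3, h, Real.sqrt_one]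

lemma norm3_tetraP (i : Fin 4) : norm3 (tetraP i) = 1 := norm3_eq_one (tetraP_self i)

lemma norm3_sub_comm (a b : Fin 3 → ℝ) : norm3 (a - b) = norm3 (b - a) := by
  unfold norm3
  congr 1
  apply Finset.sum_congr rfl
  intro k _
  simp only [Pi.sub_apply]
  ring

lemma dist_PP {i j : Fin 4} (h : i ≠ j) : norm3 (tetraP i - tetraP j) ^ 2 = 8/3 := by
  rw [norm3_sq]
  have hi := tetraP_self i; have hj := tetraP_self j; have hij := tetraP_dot h
  simp only [Pi.sub_apply, Fin.sum_univ_three] at *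
  linear_combination hi + hj - 2 * hij

lemma r_norm {i j : Fin 4} (h : i ≠ j) :
    norm3 (fun k => -(Real.sqrt 3/2) * (tetraP i k + tetraP j k)) = 1 := by
  apply norm3_eq_one
  have hi := tetraP_self i; have hj := tetraP_self j; have hij := tetraP_dot h
  have h3 : Real.sqrt 3 * Real.sqrt 3 = 3 := Real.mul_self_sqrt (by norm_num)
  simp only [Fin.sum_univ_three] at *
  linear_combination (Real.sqrt 3 * Real.sqrt 3/4) * hi + (Real.sqrt 3 * Real.sqrt 3/4) * hj
    + (Real.sqrt 3 * Real.sqrt 3/2) * hij + (1/3) * h3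

lemma dist_Pr {i j : Fin 4} (h : i ≠ j) :
    norm3 (tetraP i - fun k => -(Real.sqrt 3/2) * (tetraP i k + tetraP j k)) ^ 2
      = 2 + 2 * Real.sqrt 3 / 3 := by
  rw [norm3_sq]
  have hi := tetraP_self i; have hj := tetraP_self j; have hij := tetraP_dot h
  have h3 : Real.sqrt 3 * Real.sqrt 3 = 3 := Real.mul_self_sqrt (by norm_num)
  simp only [Pi.sub_apply, Fin.sum_univ_three] at *
  linear_combination (1 + Real.sqrt 3 + Real.sqrt 3 * Real.sqrt 3/4) * hi
    + (Real.sqrt 3 * Real.sqrt 3/4) * hj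
    + (Real.sqrt 3 + Real.sqrt 3 * Real.sqrt 3/2) * hij + (1/3) * h3

lemma dist_Pr' {i j : Fin 4} (h : i ≠ j) :
    norm3 (tetraP j - fun k => -(Real.sqrt 3/2) * (tetraP i k + tetraP j k)) ^ 2
      = 2 + 2 * Real.sqrt 3 / 3 := by
  rw [norm3_sq]
  have hi := tetraP_self i; have hj := tetraP_self j; have hij := tetraP_dot h
  have h3 : Real.sqrt 3 * Real.sqrt 3 = 3 := Real.mul_self_sqrt (by norm_num)
  simp only [Pi.sub_apply, Fin.sum_univ_three] at *
  linear_combination (Real.sqrt 3 * Real.sqrt 3/4) * hi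
    + (1 + Real.sqrt 3 + Real.sqrt 3 * Real.sqrt 3/4) * hj
    + (Real.sqrt 3 + Real.sqrt 3 * Real.sqrt 3/2) * hij + (1/3) * h3

lemma dist_sink' : norm3 (tetraP 3 - fun k => -(tetraP 3 k)) ^ 2 = 4 := by
  rw [norm3_sq]
  have hi := tetraP_self 3
  simp only [Pi.sub_apply, Fin.sum_univ_three] at *
  linear_combination 4 * hi

lemma dist_sink'' : norm3 ((fun k => -(tetraP 3 k)) - tetraP 3) ^ 2 = 4 := by
  rw [norm3_sub_comm]; exact dist_sink'

lemma norm3_neg_tetraP : norm3 (fun k => -(tetraP 3 k)) = 1 := by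
  apply norm3_eq_one
  have := tetraP_self 3
  simp only [Fin.sum_univ_three] at *
  linear_combination this

lemma dist_le (a b : Fin 3 → ℝ) (ha : norm3 a = 1) (hb : norm3 b = 1) :
    norm3 (a - b) ^ 2 ≤ 4 := by
  have ha' : ∑ k, a k ^ 2 = 1 := by
    have := congrArg (· ^ 2) ha
    simpa [norm3_sq] using this
  have hb' : ∑ k, b k ^ 2 = 1 := by
    have := congrArg (· ^ 2) hb
    simpa [norm3_sq] using this
  rw [norm3_sq]
  simp only [Pi.sub_apply, Fin.sum_univ_three] at *
  nlinarith [sq_nonneg (a 0 + b 0), sq_nonneg (a 1 + b 1), sq_nonneg (a 2 + b 2)]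

/-! ### Adjacency characterizations -/

variable {V : Type} [Fintype V] [DecidableEq V] (G : SimpleGraph V) [DecidableRel G.Adj]

lemma clique_adj_VV (u v : V) : (cliqueGadget G).Adj (.inl u) (.inl v) ↔ G.Adj u v := by
  constructor
  · rintro ⟨-, h | h⟩
    · exact h
    · exact h.symm
  · intro h
    exact ⟨by simpa using h.ne, Or.inl h⟩

lemma clique_adj_Vq (u : V) (e : G.edgeSet) :
    (cliqueGadget G).Adj (.inl u) (.inr (.inl e)) ↔ u ∈ (e : Sym2 V) := by
  constructor
  · rintro ⟨-, h | h⟩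
    · exact h
    · exact h.elim
  · intro h
    exact ⟨by simp, Or.inl h⟩

lemma clique_adj_Vt (u : V) (e : G.edgeSet) :
    (cliqueGadget G).Adj (.inl u) (.inr (.inr e)) ↔ u ∈ (e : Sym2 V) := by
  constructor
  · rintro ⟨-, h | h⟩
    · exact h
    · exact h.elim
  · intro h
    exact ⟨by simp, Or.inl h⟩

lemma clique_adj_qt (e e' : G.edgeSet) :
    (cliqueGadget G).Adj (.inr (.inl e)) (.inr (.inr e')) ↔ e = e' := by
  constructor
  · rintro ⟨-, h | h⟩
    · exact Subtype.ext h
    · exact h.elim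
  · intro h
    exact ⟨by simp, Or.inl (by rw [h])⟩

lemma clique_adj_qq (e e' : G.edgeSet) :
    ¬ (cliqueGadget G).Adj (.inr (.inl e)) (.inr (.inl e')) := by
  rintro ⟨-, h | h⟩ <;> exact h.elim

lemma clique_adj_tt (e e' : G.edgeSet) :
    ¬ (cliqueGadget G).Adj (.inr (.inr e)) (.inr (.inr e')) := by
  rintro ⟨-, h | h⟩ <;> exact h.elim

lemma tetra_adj_11 (a b : V ⊕ (G.edgeSet ⊕ G.edgeSet)) :
    (tetraGadget G).Adj (.inl (.inl a)) (.inl (.inl b)) ↔ (cliqueGadget G).Adj a b := by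
  rcases a with u | e | e <;> rcases b with v | f | f <;>
  · constructor
    · rintro ⟨-, h | h⟩
      · exact h
      · exact h.symm
    · intro h
      exact ⟨by simpa using h.ne, Or.inl h⟩

lemma tetra_adj_1r (a : V ⊕ (G.edgeSet ⊕ G.edgeSet)) (ε : (cliqueGadget G).edgeSet) :
    (tetraGadget G).Adj (.inl (.inl a)) (.inl (.inr ε)) ↔
      a ∈ (ε : Sym2 (V ⊕ (G.edgeSet ⊕ G.edgeSet))) := by
  rcases a with u | e | e <;>
  · constructor
    · rintro ⟨-, h | h⟩
      · exact h
      · exact h.elim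
    · intro h
      exact ⟨by simp, Or.inl h⟩

lemma tetra_adj_r1 (a : V ⊕ (G.edgeSet ⊕ G.edgeSet)) (ε : (cliqueGadget G).edgeSet) :
    (tetraGadget G).Adj (.inl (.inr ε)) (.inl (.inl a)) ↔
      a ∈ (ε : Sym2 (V ⊕ (G.edgeSet ⊕ G.edgeSet))) := by
  rw [SimpleGraph.adj_comm]; exact tetra_adj_1r G a ε

lemma tetra_adj_rr (ε ε' : (cliqueGadget G).edgeSet) :
    ¬ (tetraGadget G).Adj (.inl (.inr ε)) (.inl (.inr ε')) := by
  rintro ⟨-, h | h⟩ <;> exact h.elim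

lemma tetra_adj_ru (ε : (cliqueGadget G).edgeSet) (u : Unit) :
    ¬ (tetraGadget G).Adj (.inl (.inr ε)) (.inr u) := by
  rintro ⟨-, h | h⟩ <;> exact h.elim

lemma tetra_adj_uu (u u' : Unit) : ¬ (tetraGadget G).Adj (.inr u) (.inr u') := by
  rintro ⟨-, h | h⟩ <;> exact h.elim

lemma tetra_adj_Vu (v : V) (u : Unit) :
    ¬ (tetraGadget G).Adj (.inl (.inl (.inl v))) (.inr u) := by
  rintro ⟨-, h | h⟩ <;> exact h.elim

lemma tetra_adj_qu (e : G.edgeSet) (u : Unit) :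
    ¬ (tetraGadget G).Adj (.inl (.inl (.inr (.inl e)))) (.inr u) := by
  rintro ⟨-, h | h⟩ <;> exact h.elim

lemma tetra_adj_tu (e : G.edgeSet) (u : Unit) :
    (tetraGadget G).Adj (.inl (.inl (.inr (.inr e)))) (.inr u) := ⟨by simp, Or.inl trivial⟩

/-! ### The coloring-induced assignment -/

def thrd (a b : Fin 3) : Fin 3 := ⟨(6 - a.val - b.val) % 3, by omega⟩

lemma thrd_comm : ∀ a b, thrd a b = thrd b a := by decide
lemma thrd_ne₁ : ∀ a b : Fin 3, a ≠ b → thrd a b ≠ a := by decide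
lemma thrd_ne₂ : ∀ a b : Fin 3, a ≠ b → thrd a b ≠ b := by decide
lemma castSucc_ne_three : ∀ i : Fin 3, (i.castSucc : Fin 4) ≠ 3 := by decide

def thrdE (C : G.Coloring (Fin 3)) : Sym2 V → Fin 3 :=
  Sym2.lift ⟨fun u v => thrd (C u) (C v), fun _ _ => thrd_comm _ _⟩

lemma thrdE_ne (C : G.Coloring (Fin 3)) {e : Sym2 V} (he : e ∈ G.edgeSet) {u : V}
    (hu : u ∈ e) : thrdE G C e ≠ C u := by
  revert he hu
  refine Sym2.inductionOn e ?_
  intro x y he hu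
  have hxy : C x ≠ C y := C.valid (G.mem_edgeSet.mp he)
  rcases Sym2.mem_iff.mp hu with rfl | rfl
  · exact thrd_ne₁ _ _ hxy
  · exact thrd_ne₂ _ _ hxy

def idx (C : G.Coloring (Fin 3)) : V ⊕ (G.edgeSet ⊕ G.edgeSet) → Fin 4
  | .inl v => (C v).castSucc
  | .inr (.inl e) => (thrdE G C e).castSucc
  | .inr (.inr _) => 3

lemma idx_ne (C : G.Coloring (Fin 3)) {a b : V ⊕ (G.edgeSet ⊕ G.edgeSet)}
    (h : (cliqueGadget G).Adj a b) : idx G C a ≠ idx G C b := by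
  rcases a with u | e | e <;> rcases b with v | f | f
  · have h' := (clique_adj_VV G u v).mp h
    simpa [idx, Fin.castSucc_inj] using C.valid h'
  · have h' := (clique_adj_Vq G u f).mp h
    simpa [idx, Fin.castSucc_inj] using (thrdE_ne G C f.2 h').symm
  · exact castSucc_ne_three _
  · have h' := (clique_adj_Vq G v e).mp h.symm
    simpa [idx, Fin.castSucc_inj] using thrdE_ne G C e.2 h'
  · exact absurd h (clique_adj_qq G e f)
  · exact castSucc_ne_three _
  · exact (castSucc_ne_three _).symm
  · exact (castSucc_ne_three _).symm
  · exact absurd h (clique_adj_tt G e f)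

noncomputable def rv (C : G.Coloring (Fin 3)) :
    Sym2 (V ⊕ (G.edgeSet ⊕ G.edgeSet)) → Fin 3 → ℝ :=
  Sym2.lift ⟨fun a b => fun k => -(Real.sqrt 3/2) * (tetraP (idx G C a) k + tetraP (idx G C b) k),
    fun _ _ => by funext k; ring⟩

noncomputable def bigX (C : G.Coloring (Fin 3)) :
    ((V ⊕ (G.edgeSet ⊕ G.edgeSet)) ⊕ (cliqueGadget G).edgeSet) ⊕ Unit → Fin 3 → ℝ
  | .inl (.inl a) => tetraP (idx G C a)
  | .inl (.inr ε) => rv G C ε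
  | .inr _ => fun k => -(tetraP 3 k)

lemma rv_norm (C : G.Coloring (Fin 3)) {ζ : Sym2 (V ⊕ (G.edgeSet ⊕ G.edgeSet))}
    (hζ : ζ ∈ (cliqueGadget G).edgeSet) : norm3 (rv G C ζ) = 1 := by
  revert hζ
  refine Sym2.inductionOn ζ ?_
  intro a b hab
  have h := idx_ne G C ((cliqueGadget G).mem_edgeSet.mp hab)
  rw [rv, Sym2.lift_mk]
  exact r_norm h

lemma bigX_norm (C : G.Coloring (Fin 3)) :
    ∀ w, norm3 (bigX G C w) = 1 := by
  rintro ((a | ε) | u)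
  · exact norm3_tetraP _
  · exact rv_norm G C ε.2
  · exact norm3_neg_tetraP

lemma sum_mem_dist (C : G.Coloring (Fin 3)) {ζ : Sym2 (V ⊕ (G.edgeSet ⊕ G.edgeSet))}
    (hζ : ζ ∈ (cliqueGadget G).edgeSet) :
    ∑ a : V ⊕ (G.edgeSet ⊕ G.edgeSet),
        (if a ∈ ζ then norm3 (tetraP (idx G C a) - rv G C ζ) ^ 2 else 0)
      = 4 + 4 * Real.sqrt 3 / 3 := by
  revert hζ
  refine Sym2.inductionOn ζ ?_
  intro p q hpq
  have hadj := (cliqueGadget G).mem_edgeSet.mp hpq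
  have hne : p ≠ q := hadj.ne
  have hidx := idx_ne G C hadj
  have hcond : ∀ a, (a ∈ s(p,q)) = (a ∈ ({p, q} : Finset _)) := by
    intro a
    simp [Sym2.mem_iff]
  calc ∑ a, (if a ∈ s(p,q) then norm3 (tetraP (idx G C a) - rv G C s(p,q)) ^ 2 else 0)
      = ∑ a ∈ Finset.univ ∩ {p, q}, norm3 (tetraP (idx G C a) - rv G C s(p,q)) ^ 2 := by
        rw [← Finset.sum_ite_mem]
        exact Finset.sum_congr rfl fun a _ => if_congr (by simp [Sym2.mem_iff]) rfl rfl
    _ = ∑ a ∈ ({p, q} : Finset _), norm3 (tetraP (idx G C a) - rv G C s(p,q)) ^ 2 := by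
        rw [Finset.univ_inter]
    _ = norm3 (tetraP (idx G C p) - rv G C s(p,q)) ^ 2
        + norm3 (tetraP (idx G C q) - rv G C s(p,q)) ^ 2 := Finset.sum_pair hne
    _ = 4 + 4 * Real.sqrt 3 / 3 := by
        rw [rv, Sym2.lift_mk]
        rw [dist_Pr hidx, dist_Pr' hidx]
        ring

/-! ### Edge count of the clique gadget -/

lemma out_mk (e : G.edgeSet) : s((e : Sym2 V).out.1, (e : Sym2 V).out.2) = (e : Sym2 V) := by
  conv_rhs => rw [← (e : Sym2 V).out_eq]

lemma out_adj (e : G.edgeSet) : G.Adj (e : Sym2 V).out.1 (e : Sym2 V).out.2 := by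
  rw [← SimpleGraph.mem_edgeSet, out_mk]
  exact e.2

lemma out_ne (e : G.edgeSet) : (e : Sym2 V).out.1 ≠ (e : Sym2 V).out.2 :=
  (out_adj G e).ne

noncomputable def gadgetEdges (e : G.edgeSet) :
    Fin 6 → Sym2 (V ⊕ (G.edgeSet ⊕ G.edgeSet))
  | ⟨0, _⟩ => s(.inl ((e : Sym2 V).out.1), .inl ((e : Sym2 V).out.2))
  | ⟨1, _⟩ => s(.inl ((e : Sym2 V).out.1), .inr (.inl e))
  | ⟨2, _⟩ => s(.inl ((e : Sym2 V).out.2), .inr (.inl e))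
  | ⟨3, _⟩ => s(.inl ((e : Sym2 V).out.1), .inr (.inr e))
  | ⟨4, _⟩ => s(.inl ((e : Sym2 V).out.2), .inr (.inr e))
  | ⟨_ + 5, _⟩ => s(.inr (.inl e), .inr (.inr e))

lemma gadgetEdges_mem (e : G.edgeSet) (k : Fin 6) :
    gadgetEdges G e k ∈ (cliqueGadget G).edgeSet := by
  fin_cases k
  · exact (clique_adj_VV G _ _).mpr (out_adj G e)
  · exact (clique_adj_Vq G _ _).mpr (Sym2.out_fst_mem _)
  · exact (clique_adj_Vq G _ _).mpr (Sym2.out_snd_mem _)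
  · exact (clique_adj_Vt G _ _).mpr (Sym2.out_fst_mem _)
  · exact (clique_adj_Vt G _ _).mpr (Sym2.out_snd_mem _)
  · exact (clique_adj_qt G _ _).mpr rfl

lemma eq_of_out_eq {e e' : G.edgeSet}
    (h : ((e : Sym2 V).out.1 = (e' : Sym2 V).out.1 ∧ (e : Sym2 V).out.2 = (e' : Sym2 V).out.2)
      ∨ ((e : Sym2 V).out.1 = (e' : Sym2 V).out.2 ∧ (e : Sym2 V).out.2 = (e' : Sym2 V).out.1)) :
    e = e' := by
  apply Subtype.ext
  rw [← out_mk G e, ← out_mk G e', Sym2.eq_iff]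
  exact h

noncomputable def inj6 : G.edgeSet × Fin 6 → (cliqueGadget G).edgeSet :=
  fun p => ⟨gadgetEdges G p.1 p.2, gadgetEdges_mem G p.1 p.2⟩

lemma inj6_inj : Function.Injective (inj6 G) := by
  rintro ⟨e, k⟩ ⟨e', k'⟩ h
  have h' : gadgetEdges G e k = gadgetEdges G e' k' := congrArg Subtype.val h
  clear h
  have hne := out_ne G e
  have hne' := out_ne G e'
  fin_cases k <;> fin_cases k' <;>
    simp [gadgetEdges, Sym2.eq_iff] at h' <;>
    first
      | (obtain rfl := eq_of_out_eq G h'; rfl)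
      | (obtain ⟨h1, rfl⟩ := h'; first | rfl | exact absurd h1 hne | exact absurd h1.symm hne)
      | (obtain rfl := h'; rfl)

lemma card_cliqueEdges_ge (m : ℕ) (hm : m = G.edgeFinset.card) :
    6 * m ≤ Fintype.card (cliqueGadget G).edgeSet := by
  have h := Fintype.card_le_of_injective _ (inj6_inj G)
  rw [Fintype.card_prod, Fintype.card_fin] at h
  have hE : Fintype.card G.edgeSet = m := by
    rw [hm, SimpleGraph.edgeFinset, Set.toFinset_card]
  omega

lemma blockAA (C : G.Coloring (Fin 3)) :
    (16/3 : ℝ) * (Fintype.card (cliqueGadget G).edgeSet)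
      ≤ ∑ a, ∑ b, (if (tetraGadget G).Adj (.inl (.inl a)) (.inl (.inl b))
          then norm3 (bigX G C (.inl (.inl a)) - bigX G C (.inl (.inl b))) ^ 2 else 0) := by
  have hpt : ∀ a b : V ⊕ (G.edgeSet ⊕ G.edgeSet),
      (if (tetraGadget G).Adj (.inl (.inl a)) (.inl (.inl b))
          then norm3 (bigX G C (.inl (.inl a)) - bigX G C (.inl (.inl b))) ^ 2 else 0)
        = (if (cliqueGadget G).Adj a b then (8/3 : ℝ) else 0) := by
    intro a b
    by_cases h : (cliqueGadget G).Adj a b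
    · rw [if_pos ((tetra_adj_11 G a b).mpr h), if_pos h]
      exact dist_PP (idx_ne G C h)
    · rw [if_neg (fun hh => h ((tetra_adj_11 G a b).mp hh)), if_neg h]
  rw [Finset.sum_congr rfl fun a _ => Finset.sum_congr rfl fun b _ => hpt a b,
    ← Finset.sum_product', Finset.univ_product_univ]
  set A := V ⊕ (G.edgeSet ⊕ G.edgeSet)
  set ψ : (cliqueGadget G).edgeSet × Bool → A × A := fun q =>
    if q.2 then ((q.1 : Sym2 A).out.1, (q.1 : Sym2 A).out.2)
      else ((q.1 : Sym2 A).out.2, (q.1 : Sym2 A).out.1) with hψ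
  have houtmk : ∀ ε : (cliqueGadget G).edgeSet,
      s((ε : Sym2 A).out.1, (ε : Sym2 A).out.2) = (ε : Sym2 A) := fun ε => by
    conv_rhs => rw [← (ε : Sym2 A).out_eq]
  have houtadj : ∀ ε : (cliqueGadget G).edgeSet,
      (cliqueGadget G).Adj (ε : Sym2 A).out.1 (ε : Sym2 A).out.2 := fun ε => by
    rw [← SimpleGraph.mem_edgeSet, houtmk]
    exact ε.2
  have hψinj : Function.Injective ψ := by
    rintro ⟨ε, b⟩ ⟨ε', b'⟩ h
    have hout : ∀ (x y : A × A), (x = y) → x.1 = y.1 ∧ x.2 = y.2 := by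
      rintro x y rfl; exact ⟨rfl, rfl⟩
    have hee : (ε : Sym2 A) = (ε' : Sym2 A) → ε = ε' := fun hh => Subtype.ext hh
    cases b <;> cases b' <;> simp only [hψ, if_true, if_false, Bool.false_eq_true,
        cond_false, cond_true, Prod.mk.injEq] at h <;> obtain ⟨h1, h2⟩ := h
    · obtain rfl : ε = ε' := hee (by rw [← houtmk ε, ← houtmk ε', h1, h2])
      rfl
    · obtain rfl : ε = ε' := hee (by rw [← houtmk ε, ← houtmk ε', h1, h2, Sym2.eq_swap])
      exact absurd h1 (houtadj ε).ne'
    · obtain rfl : ε = ε' := hee (by rw [← houtmk ε, ← houtmk ε', h1, h2, Sym2.eq_swap])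
      exact absurd h1 (houtadj ε).ne
    · obtain rfl : ε = ε' := hee (by rw [← houtmk ε, ← houtmk ε', h1, h2])
      rfl
  calc (16/3 : ℝ) * (Fintype.card (cliqueGadget G).edgeSet)
      = ∑ _q : (cliqueGadget G).edgeSet × Bool, (8/3 : ℝ) := by
        rw [Finset.sum_const, Finset.card_univ, Fintype.card_prod, Fintype.card_bool,
          nsmul_eq_mul]
        push_cast
        ring
    _ = ∑ q : (cliqueGadget G).edgeSet × Bool,
          (if (cliqueGadget G).Adj (ψ q).1 (ψ q).2 then (8/3 : ℝ) else 0) := by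
        refine Finset.sum_congr rfl fun q _ => ?_
        rcases q with ⟨ε, b⟩
        cases b
        · rw [if_pos]
          simp only [hψ, Bool.false_eq_true, if_false]
          exact (houtadj ε).symm
        · rw [if_pos]
          simp only [hψ, if_true]
          exact houtadj ε
    _ = ∑ p ∈ Finset.univ.image ψ,
          (if (cliqueGadget G).Adj p.1 p.2 then (8/3 : ℝ) else 0) :=
        (Finset.sum_image
          (f := fun p : A × A => if (cliqueGadget G).Adj p.1 p.2 then (8/3 : ℝ) else 0)
          fun x _ y _ h => hψinj h).symm
    _ ≤ ∑ p : A × A, (if (cliqueGadget G).Adj p.1 p.2 then (8/3 : ℝ) else 0) := by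
        refine Finset.sum_le_sum_of_subset_of_nonneg (Finset.subset_univ _) ?_
        intro p _ _
        split_ifs
        · norm_num
        · exact le_refl 0

lemma blockAF (C : G.Coloring (Fin 3)) :
    ∑ a, ∑ ε, (if (tetraGadget G).Adj (.inl (.inl a)) (.inl (.inr ε))
          then norm3 (bigX G C (.inl (.inl a)) - bigX G C (.inl (.inr ε))) ^ 2 else 0)
      = (Fintype.card (cliqueGadget G).edgeSet) * (4 + 4 * Real.sqrt 3 / 3) := by
  rw [Finset.sum_comm]
  have hpt : ∀ ε : (cliqueGadget G).edgeSet,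
      ∑ a, (if (tetraGadget G).Adj (.inl (.inl a)) (.inl (.inr ε))
          then norm3 (bigX G C (.inl (.inl a)) - bigX G C (.inl (.inr ε))) ^ 2 else 0) = 4 + 4 * Real.sqrt 3 / 3 := by
    intro ε
    have hc : ∀ a, (if (tetraGadget G).Adj (.inl (.inl a)) (.inl (.inr ε))
          then norm3 (bigX G C (.inl (.inl a)) - bigX G C (.inl (.inr ε))) ^ 2 else 0)
        = (if a ∈ (ε : Sym2 (V ⊕ (G.edgeSet ⊕ G.edgeSet)))
            then norm3 (tetraP (idx G C a) - rv G C (ε : Sym2 _)) ^ 2 else 0) := by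
      intro a
      exact if_congr (tetra_adj_1r G a ε) rfl rfl
    rw [Finset.sum_congr rfl fun a _ => hc a]
    exact sum_mem_dist G C ε.2
  rw [Finset.sum_congr rfl fun ε _ => hpt ε, Finset.sum_const, Finset.card_univ, nsmul_eq_mul]

lemma blockFA (C : G.Coloring (Fin 3)) :
    ∑ ε, ∑ b, (if (tetraGadget G).Adj (.inl (.inr ε)) (.inl (.inl b))
          then norm3 (bigX G C (.inl (.inr ε)) - bigX G C (.inl (.inl b))) ^ 2 else 0)
      = (Fintype.card (cliqueGadget G).edgeSet) * (4 + 4 * Real.sqrt 3 / 3) := by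
  have hpt : ∀ ε : (cliqueGadget G).edgeSet,
      ∑ b, (if (tetraGadget G).Adj (.inl (.inr ε)) (.inl (.inl b))
          then norm3 (bigX G C (.inl (.inr ε)) - bigX G C (.inl (.inl b))) ^ 2 else 0) = 4 + 4 * Real.sqrt 3 / 3 := by
    intro ε
    have hc : ∀ b, (if (tetraGadget G).Adj (.inl (.inr ε)) (.inl (.inl b))
          then norm3 (bigX G C (.inl (.inr ε)) - bigX G C (.inl (.inl b))) ^ 2 else 0)
        = (if b ∈ (ε : Sym2 (V ⊕ (G.edgeSet ⊕ G.edgeSet)))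
            then norm3 (tetraP (idx G C b) - rv G C (ε : Sym2 _)) ^ 2 else 0) := by
      intro b
      refine if_congr (tetra_adj_r1 G b ε) ?_ rfl
      rw [norm3_sub_comm]
      exact rfl
    rw [Finset.sum_congr rfl fun b _ => hc b]
    exact sum_mem_dist G C ε.2
  rw [Finset.sum_congr rfl fun ε _ => hpt ε, Finset.sum_const, Finset.card_univ, nsmul_eq_mul]

lemma blockAU (C : G.Coloring (Fin 3)) (m : ℕ) (hm : m = G.edgeFinset.card) :
    ∑ a, ∑ u : Unit, (if (tetraGadget G).Adj (.inl (.inl a)) (.inr u)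
          then norm3 (bigX G C (.inl (.inl a)) - bigX G C (.inr u)) ^ 2 else 0) = 4 * m := by
  have hEm : Fintype.card G.edgeSet = m := by
    rw [hm, SimpleGraph.edgeFinset, Set.toFinset_card]
  have hsplit : ∑ a, ∑ u : Unit, (if (tetraGadget G).Adj (.inl (.inl a)) (.inr u)
          then norm3 (bigX G C (.inl (.inl a)) - bigX G C (.inr u)) ^ 2 else 0)
      = ∑ a, (if (tetraGadget G).Adj (.inl (.inl a)) (.inr ())
          then norm3 (bigX G C (.inl (.inl a)) - bigX G C (.inr ())) ^ 2 else 0) :=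
    Finset.sum_congr rfl fun a _ => Fintype.sum_unique _
  rw [hsplit, Fintype.sum_sum_type, Fintype.sum_sum_type]
  have h1 : ∑ v : V, (if (tetraGadget G).Adj (.inl (.inl (.inl v))) (.inr ())
          then norm3 (bigX G C (.inl (.inl (.inl v))) - bigX G C (.inr ())) ^ 2 else 0) = 0 :=
    Finset.sum_eq_zero fun v _ => if_neg (tetra_adj_Vu G v ())
  have h2 : ∑ e : G.edgeSet, (if (tetraGadget G).Adj (.inl (.inl (.inr (.inl e)))) (.inr ())
          then norm3 (bigX G C (.inl (.inl (.inr (.inl e)))) - bigX G C (.inr ())) ^ 2 else 0) = 0 :=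
    Finset.sum_eq_zero fun e _ => if_neg (tetra_adj_qu G e ())
  have h3 : ∑ e : G.edgeSet, (if (tetraGadget G).Adj (.inl (.inl (.inr (.inr e)))) (.inr ())
          then norm3 (bigX G C (.inl (.inl (.inr (.inr e)))) - bigX G C (.inr ())) ^ 2 else 0) = 4 * m := by
    have hval : ∀ e : G.edgeSet, (if (tetraGadget G).Adj (.inl (.inl (.inr (.inr e)))) (.inr ())
          then norm3 (bigX G C (.inl (.inl (.inr (.inr e)))) - bigX G C (.inr ())) ^ 2 else 0) = 4 := by
      intro e
      rw [if_pos (tetra_adj_tu G e ())]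
      exact dist_sink'
    rw [Finset.sum_congr rfl fun e _ => hval e, Finset.sum_const, Finset.card_univ, hEm,
      nsmul_eq_mul, mul_comm]
  rw [h1, h2, h3]
  ring

lemma blockUA (C : G.Coloring (Fin 3)) (m : ℕ) (hm : m = G.edgeFinset.card) :
    ∑ u : Unit, ∑ b, (if (tetraGadget G).Adj (.inr u) (.inl (.inl b))
          then norm3 (bigX G C (.inr u) - bigX G C (.inl (.inl b))) ^ 2 else 0) = 4 * m := by
  have hEm : Fintype.card G.edgeSet = m := by
    rw [hm, SimpleGraph.edgeFinset, Set.toFinset_card]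
  have hsplit : ∑ u : Unit, ∑ b, (if (tetraGadget G).Adj (.inr u) (.inl (.inl b))
          then norm3 (bigX G C (.inr u) - bigX G C (.inl (.inl b))) ^ 2 else 0)
      = ∑ b, (if (tetraGadget G).Adj (.inr ()) (.inl (.inl b))
          then norm3 (bigX G C (.inr ()) - bigX G C (.inl (.inl b))) ^ 2 else 0) := Fintype.sum_unique _
  rw [hsplit, Fintype.sum_sum_type, Fintype.sum_sum_type]
  have h1 : ∑ v : V, (if (tetraGadget G).Adj (.inr ()) (.inl (.inl (.inl v)))
          then norm3 (bigX G C (.inr ()) - bigX G C (.inl (.inl (.inl v)))) ^ 2 else 0) = 0 :=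
    Finset.sum_eq_zero fun v _ => if_neg fun h => tetra_adj_Vu G v () h.symm
  have h2 : ∑ e : G.edgeSet, (if (tetraGadget G).Adj (.inr ()) (.inl (.inl (.inr (.inl e))))
          then norm3 (bigX G C (.inr ()) - bigX G C (.inl (.inl (.inr (.inl e))))) ^ 2 else 0) = 0 :=
    Finset.sum_eq_zero fun e _ => if_neg fun h => tetra_adj_qu G e () h.symm
  have h3 : ∑ e : G.edgeSet, (if (tetraGadget G).Adj (.inr ()) (.inl (.inl (.inr (.inr e))))
          then norm3 (bigX G C (.inr ()) - bigX G C (.inl (.inl (.inr (.inr e))))) ^ 2 else 0) = 4 * m := by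
    have hval : ∀ e : G.edgeSet, (if (tetraGadget G).Adj (.inr ()) (.inl (.inl (.inr (.inr e))))
          then norm3 (bigX G C (.inr ()) - bigX G C (.inl (.inl (.inr (.inr e))))) ^ 2 else 0) = 4 := by
      intro e
      rw [if_pos (tetra_adj_tu G e ()).symm]
      exact dist_sink''
    rw [Finset.sum_congr rfl fun e _ => hval e, Finset.sum_const, Finset.card_univ, hEm,
      nsmul_eq_mul, mul_comm]
  rw [h1, h2, h3]
  ring

set_option maxHeartbeats 2000000 in
lemma sum_lower (C : G.Coloring (Fin 3)) (m : ℕ) (hm : m = G.edgeFinset.card) :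
    (88 + 16 * Real.sqrt 3) * m
      ≤ ∑ u, ∑ v, (if (tetraGadget G).Adj (u) (v)
          then norm3 (bigX G C (u) - bigX G C (v)) ^ 2 else 0) := by
  have decomp : (∑ u, ∑ v, (if (tetraGadget G).Adj (u) (v)
          then norm3 (bigX G C (u) - bigX G C (v)) ^ 2 else 0))
      = (∑ a, ∑ b, (if (tetraGadget G).Adj (.inl (.inl a)) (.inl (.inl b))
          then norm3 (bigX G C (.inl (.inl a)) - bigX G C (.inl (.inl b))) ^ 2 else 0))
      + (∑ a, ∑ ε, (if (tetraGadget G).Adj (.inl (.inl a)) (.inl (.inr ε))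
          then norm3 (bigX G C (.inl (.inl a)) - bigX G C (.inl (.inr ε))) ^ 2 else 0))
      + (∑ a, ∑ u : Unit, (if (tetraGadget G).Adj (.inl (.inl a)) (.inr u)
          then norm3 (bigX G C (.inl (.inl a)) - bigX G C (.inr u)) ^ 2 else 0))
      + (∑ ε, ∑ b, (if (tetraGadget G).Adj (.inl (.inr ε)) (.inl (.inl b))
          then norm3 (bigX G C (.inl (.inr ε)) - bigX G C (.inl (.inl b))) ^ 2 else 0))
      + (∑ ε, ∑ ε', (if (tetraGadget G).Adj (.inl (.inr ε)) (.inl (.inr ε'))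
          then norm3 (bigX G C (.inl (.inr ε)) - bigX G C (.inl (.inr ε'))) ^ 2 else 0))
      + (∑ ε, ∑ u : Unit, (if (tetraGadget G).Adj (.inl (.inr ε)) (.inr u)
          then norm3 (bigX G C (.inl (.inr ε)) - bigX G C (.inr u)) ^ 2 else 0))
      + (∑ u : Unit, ∑ b, (if (tetraGadget G).Adj (.inr u) (.inl (.inl b))
          then norm3 (bigX G C (.inr u) - bigX G C (.inl (.inl b))) ^ 2 else 0))
      + (∑ u : Unit, ∑ ε, (if (tetraGadget G).Adj (.inr u) (.inl (.inr ε))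
          then norm3 (bigX G C (.inr u) - bigX G C (.inl (.inr ε))) ^ 2 else 0))
      + (∑ u : Unit, ∑ u' : Unit, (if (tetraGadget G).Adj (.inr u) (.inr u')
          then norm3 (bigX G C (.inr u) - bigX G C (.inr u')) ^ 2 else 0)) := by
    simp only [Fintype.sum_sum_type]
    simp only [Finset.sum_add_distrib]
    ring
  have z1 : ∑ ε, ∑ ε', (if (tetraGadget G).Adj (.inl (.inr ε)) (.inl (.inr ε'))
          then norm3 (bigX G C (.inl (.inr ε)) - bigX G C (.inl (.inr ε'))) ^ 2 else 0) = 0 :=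
    Finset.sum_eq_zero fun ε _ => Finset.sum_eq_zero fun ε' _ => if_neg (tetra_adj_rr G ε ε')
  have z2 : ∑ ε, ∑ u : Unit, (if (tetraGadget G).Adj (.inl (.inr ε)) (.inr u)
          then norm3 (bigX G C (.inl (.inr ε)) - bigX G C (.inr u)) ^ 2 else 0) = 0 :=
    Finset.sum_eq_zero fun ε _ => Finset.sum_eq_zero fun u _ => if_neg (tetra_adj_ru G ε u)
  have z3 : ∑ u : Unit, ∑ ε, (if (tetraGadget G).Adj (.inr u) (.inl (.inr ε))
          then norm3 (bigX G C (.inr u) - bigX G C (.inl (.inr ε))) ^ 2 else 0) = 0 :=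
    Finset.sum_eq_zero fun u _ => Finset.sum_eq_zero fun ε _ =>
      if_neg fun h => tetra_adj_ru G ε u h.symm
  have z4 : ∑ u : Unit, ∑ u' : Unit, (if (tetraGadget G).Adj (.inr u) (.inr u')
          then norm3 (bigX G C (.inr u) - bigX G C (.inr u')) ^ 2 else 0) = 0 :=
    Finset.sum_eq_zero fun u _ => Finset.sum_eq_zero fun u' _ => if_neg (tetra_adj_uu G u u')
  have hFF := card_cliqueEdges_ge G m hm
  have hFFR : (6 * m : ℝ) ≤ (Fintype.card (cliqueGadget G).edgeSet : ℝ) := by exact_mod_cast hFF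
  have hs3 : (0:ℝ) ≤ Real.sqrt 3 := Real.sqrt_nonneg 3
  have hAA := blockAA G C
  rw [decomp, blockAF G C, blockFA G C, blockAU G C m hm, blockUA G C m hm, z1, z2, z3, z4]
  nlinarith [mul_nonneg hs3 (sub_nonneg.mpr hFFR)]

set_option maxHeartbeats 1000000 in
/-- If `G` is 3-colorable then `MC₃(H'') ≥ (10 + 2√3)·m + m`. -/
theorem stmt18 {V : Type} [Fintype V] [DecidableEq V] (G : SimpleGraph V)
    [DecidableRel G.Adj] (m : ℕ) (hm : m = G.edgeFinset.card)
    (hcol : G.Colorable 3) :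
    mc3 (tetraGadget G) ≥ (10 + 2 * Real.sqrt 3) * m + m := by
  obtain ⟨C⟩ := hcol
  rw [ge_iff_le, mc3]
  have hbdd : BddAbove {c : ℝ | ∃ x : ((V ⊕ (G.edgeSet ⊕ G.edgeSet)) ⊕ (cliqueGadget G).edgeSet) ⊕ Unit → Fin 3 → ℝ,
      (∀ u, norm3 (x u) = 1) ∧
      c = (1 / 8) * ∑ u, ∑ v,
        if (tetraGadget G).Adj u v then (norm3 (x u - x v)) ^ 2 else 0} := by
    refine ⟨(1/8) * ((Fintype.card (((V ⊕ (G.edgeSet ⊕ G.edgeSet)) ⊕ (cliqueGadget G).edgeSet) ⊕ Unit) : ℝ)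
      * ((Fintype.card (((V ⊕ (G.edgeSet ⊕ G.edgeSet)) ⊕ (cliqueGadget G).edgeSet) ⊕ Unit) : ℝ) * 4)), ?_⟩
    rintro c ⟨x, hx, rfl⟩
    have hle : (∑ u, ∑ v, if (tetraGadget G).Adj u v then (norm3 (x u - x v)) ^ 2 else 0)
        ≤ ∑ _u : ((V ⊕ (G.edgeSet ⊕ G.edgeSet)) ⊕ (cliqueGadget G).edgeSet) ⊕ Unit,
            ∑ _v : ((V ⊕ (G.edgeSet ⊕ G.edgeSet)) ⊕ (cliqueGadget G).edgeSet) ⊕ Unit, (4:ℝ) := by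
      refine Finset.sum_le_sum fun u _ => Finset.sum_le_sum fun v _ => ?_
      split_ifs
      · exact dist_le _ _ (hx u) (hx v)
      · norm_num
    have heq : (∑ _u : ((V ⊕ (G.edgeSet ⊕ G.edgeSet)) ⊕ (cliqueGadget G).edgeSet) ⊕ Unit,
            ∑ _v : ((V ⊕ (G.edgeSet ⊕ G.edgeSet)) ⊕ (cliqueGadget G).edgeSet) ⊕ Unit, (4:ℝ))
        = (Fintype.card (((V ⊕ (G.edgeSet ⊕ G.edgeSet)) ⊕ (cliqueGadget G).edgeSet) ⊕ Unit) : ℝ)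
          * ((Fintype.card (((V ⊕ (G.edgeSet ⊕ G.edgeSet)) ⊕ (cliqueGadget G).edgeSet) ⊕ Unit) : ℝ) * 4) := by
      rw [Finset.sum_const, Finset.sum_const, Finset.card_univ, nsmul_eq_mul, nsmul_eq_mul]
    rw [← heq]
    have h8 : (0:ℝ) ≤ 1/8 := by norm_num
    exact mul_le_mul_of_nonneg_left hle h8
  refine le_csSup_of_le hbdd ⟨bigX G C, bigX_norm G C, rfl⟩ ?_
  have hS := sum_lower G C m hm
  have hs3 : (0:ℝ) ≤ Real.sqrt 3 := Real.sqrt_nonneg 3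
  nlinarith [hS]
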